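/- arXiv:math/0611599 — 4 statements merged into one kernel-verified Lean document; each statement's English description precedes it below -/
import Mathlib

section
/- Let (X, β, μ) be a probability space and T : X → X a measure-preserving transformation. Then T is weak-mixing if and only if for every measurable set A there exists a full set J ⊆ ℕ (containing arbitrarily long runs of consecutive integers) such that lim_{n∈J, n→∞} μ(T^{-n}A ∩ A) = μ(A)². -/
/-
Forward: a sequence whose Cesàro means tend to `0` is small on arbitrarily long runs, and a
diagonal choice of such runs is a full set.

Backward: with `f = 1_A - μ A` and `g = 1_B - μ B`, let `F = f ⊗ f` on `X × X` and `V` the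
Koopman operator of `T × T`, so that `⟪Vⁿ F, g ⊗ g⟫ = (∫ f ∘ Tⁿ * g)²`. The projection `P F`
of `F` onto the `V`-invariant vectors satisfies `‖P F‖² = ⟪Vⁿ P F, F⟫`, which the mean ergodic
theorem approximates by averages of `⟪Vⁿ⁺ᵏ F, F⟫ = (μ (T⁻ⁿ⁻ᵏ A ∩ A) - (μ A)²)²` over long
runs. Along the runs of `J` these are small, so `P F = 0`: the Cesàro means of
`⟪Vᵏ F, g ⊗ g⟫ = (μ (T⁻ᵏ A ∩ B) - μ A μ B)²` tend to `0`, and Cauchy–Schwarz removes the square.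
-/

open MeasureTheory Filter

/-- A set `J ⊆ ℕ` is *full* if it contains arbitrarily long runs of consecutive integers. -/
def IsFullSet (J : Set ℕ) : Prop := ∀ N : ℕ, ∃ k : ℕ, ∀ i ≤ N, k + i ∈ J

/-- Weak mixing: Cesàro convergence of `|μ(T⁻ᵏA ∩ B) - μ(A)μ(B)|` to zero. -/
def WeakMixing {X : Type*} [MeasurableSpace X] (μ : Measure X) (T : X → X) : Prop :=
  ∀ A B : Set X, MeasurableSet A → MeasurableSet B →
    Tendsto (fun n : ℕ =>
        (∑ k ∈ Finset.range n,
          |(μ (T^[k] ⁻¹' A ∩ B)).toReal - (μ A).toReal * (μ B).toReal|) / n)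
      atTop (nhds 0)

open Finset Topology
open scoped InnerProductSpace

theorem IsFullSet.exists_run_of_eventually {J : Set ℕ} (hJ : IsFullSet J) {p : ℕ → Prop}
    (hp : ∀ᶠ n in atTop ⊓ 𝓟 J, p n) (L : ℕ) : ∃ k, ∀ i ≤ L, p (k + i) := by
  obtain ⟨N, hN⟩ := eventually_atTop.1 (eventually_inf_principal.1 hp)
  obtain ⟨k, hk⟩ := hJ (N + L)
  exact ⟨k + N, fun i hi => by simpa [add_assoc] using hN _ (by omega) (hk (N + i) (by omega))⟩

theorem exists_isFullSet_tendsto_of_forall_run {α : Type*} [PseudoMetricSpace α] {u : ℕ → α}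
    {a : α} (h : ∀ ε > 0, ∀ L, ∃ k, ∀ i ≤ L, dist (u (k + i)) a < ε) :
    ∃ J, IsFullSet J ∧ Tendsto u (atTop ⊓ 𝓟 J) (𝓝 a) := by
  choose K hK using fun m : ℕ => h (1 / (m + 1)) Nat.one_div_pos_of_nat m
  refine ⟨{n | ∃ m, ∃ i ≤ m, n = K m + i}, fun m => ⟨K m, fun i hi => ⟨m, i, hi, rfl⟩⟩, ?_⟩
  refine Metric.tendsto_nhds.2 fun ε hε => ?_
  obtain ⟨m₀, hm₀⟩ := exists_nat_one_div_lt hε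
  -- far out, a point of `J` can only lie in a run `K m, …, K m + m` with `m ≥ m₀`
  have hlate : ∀ᶠ n in atTop, ∀ m ∈ Set.Iio m₀, K m + m < n :=
    (Set.finite_Iio m₀).eventually_all.2 fun m _ => eventually_gt_atTop _
  filter_upwards [hlate.filter_mono inf_le_left, mem_inf_of_right (mem_principal_self _)]
    with n hn ⟨m, i, hi, hn'⟩
  subst hn'
  have hm : m₀ ≤ m := not_lt.1 fun hm => by have := hn m hm; omega
  calc dist (u (K m + i)) a < 1 / (m + 1) := hK m i hi
  _ ≤ 1 / (m₀ + 1) := by gcongr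
  _ < ε := hm₀

theorem natCast_mul_le_sum_range_of_forall_exists_le {b : ℕ → ℝ} (hb : ∀ n, 0 ≤ b n) {ε : ℝ}
    {L : ℕ} (h : ∀ k, ∃ i ≤ L, ε ≤ b (k + i)) (N : ℕ) :
    N * ε ≤ ∑ k ∈ range (N * (L + 1)), b k := by
  induction N with
  | zero => simp
  | succ N ih =>
    obtain ⟨i, hi, hεi⟩ := h (N * (L + 1))
    have hblock : b (N * (L + 1) + i) ≤ ∑ j ∈ range (L + 1), b (N * (L + 1) + j) :=
      single_le_sum (f := fun j => b (N * (L + 1) + j)) (fun j _ => hb _)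
        (mem_range.2 (by omega))
    rw [Nat.succ_mul, sum_range_add]
    push_cast
    linarith

theorem exists_run_lt_of_tendsto_cesaro_zero {b : ℕ → ℝ} (hb : ∀ n, 0 ≤ b n)
    (h : Tendsto (fun n : ℕ => (∑ k ∈ range n, b k) / n) atTop (𝓝 0)) {ε : ℝ} (hε : 0 < ε)
    (L : ℕ) : ∃ k, ∀ i ≤ L, b (k + i) < ε := by
  by_contra! hrun
  have hblocks : Tendsto (fun N : ℕ => N * (L + 1)) atTop atTop :=
    tendsto_atTop_mono (fun N => Nat.le_mul_of_pos_right N (by omega)) tendsto_id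
  have hlow : ∀ N ≥ 1, ε / (L + 1) ≤ (∑ k ∈ range (N * (L + 1)), b k) / ↑(N * (L + 1)) := by
    intro N hN
    have hN' : (1 : ℝ) ≤ N := by exact_mod_cast hN
    rw [le_div_iff₀ (by positivity)]
    calc ε / (L + 1) * ↑(N * (L + 1)) = N * ε := by push_cast; field_simp
    _ ≤ _ := natCast_mul_le_sum_range_of_forall_exists_le hb hrun N
  have hle := ge_of_tendsto (h.comp hblocks) (eventually_atTop.2 ⟨1, hlow⟩)
  have hpos : 0 < ε / (L + 1) := by positivity
  linarith

theorem tendsto_cesaro_abs_of_tendsto_cesaro_sq {β : ℕ → ℝ}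
    (h : Tendsto (fun n : ℕ => (∑ k ∈ range n, β k ^ 2) / n) atTop (𝓝 0)) :
    Tendsto (fun n : ℕ => (∑ k ∈ range n, |β k|) / n) atTop (𝓝 0) := by
  have hle : ∀ n : ℕ, (∑ k ∈ range n, |β k|) / n ≤ √((∑ k ∈ range n, β k ^ 2) / n) := by
    intro n
    have hCS := sum_div_card_sq_le_sum_sq_div_card (s := range n) (f := fun k => |β k|)
    simp only [card_range, sq_abs] at hCS
    exact (le_abs_self _).trans (Real.abs_le_sqrt hCS)
  simpa using squeeze_zero (fun n => by positivity) hle (by simpa using h.sqrt)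

section MeanErgodic

variable {E : Type*} [NormedAddCommGroup E] [InnerProductSpace ℝ E]

theorem inner_iterate_birkhoffAverage (V : E →L[ℝ] E) (x y : E) (n L : ℕ) :
    ⟪V^[n] (birkhoffAverage ℝ V id L x), y⟫_ℝ = (∑ k ∈ range L, ⟪V^[n + k] x, y⟫_ℝ) / L := by
  rw [← FunLike.coe_pow_eq_iterate]
  simp [birkhoffAverage, birkhoffSum, map_sum, inner_smul_left, sum_inner, div_eq_inv_mul,
    Function.iterate_add_apply]

theorem tendsto_birkhoffAverage_zero_of_tendsto_inner_iterate [CompleteSpace E] {V : E →L[ℝ] E}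
    (hV : ‖V‖ ≤ 1) {x : E} {J : Set ℕ} (hJ : IsFullSet J)
    (hx : Tendsto (fun n => ⟪V^[n] x, x⟫_ℝ) (atTop ⊓ 𝓟 J) (𝓝 0)) :
    Tendsto (birkhoffAverage ℝ V id · x) atTop (𝓝 0) := by
  set K := V.eqLocus (1 : E →L[ℝ] E)
  set p : E := ↑(K.orthogonalProjectionOnto x)
  have hlim : Tendsto (birkhoffAverage ℝ V id · x) atTop (𝓝 p) :=
    V.tendsto_birkhoffAverage_orthogonalProjection hV x
  suffices p = 0 by rwa [this] at hlim
  have hfix : ∀ n, V^[n] p = p := Function.iterate_fixed (K.orthogonalProjectionOnto x).2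
  have hpx : ⟪p, x⟫_ℝ = ‖p‖ ^ 2 := by
    rw [real_inner_comm, ← K.inner_orthogonalProjectionOnto_eq_of_mem_right,
      ← real_inner_self_eq_norm_sq]
    rfl
  have hcontr : ∀ n z, ‖V^[n] z‖ ≤ ‖z‖ := fun n z => by
    simpa using ((V.lipschitz.weaken (NNReal.coe_le_one.1 hV)).iterate n).norm_le_mul
      (iterate_map_zero V n) z
  -- `‖p‖² = ⟪Vⁿ p, x⟫` as `p` is `V`-invariant, and `p` is the limit of the Birkhoff averages
  have hkey : ∀ n L, ‖p‖ ^ 2 ≤ (∑ k ∈ range L, ⟪V^[n + k] x, x⟫_ℝ) / L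
      + ‖birkhoffAverage ℝ V id L x - p‖ * ‖x‖ := by
    intro n L
    set a := birkhoffAverage ℝ V id L x
    have hsplit : ⟪p, x⟫_ℝ = ⟪V^[n] a, x⟫_ℝ - ⟪V^[n] (a - p), x⟫_ℝ := by
      rw [← FunLike.coe_pow_eq_iterate, map_sub, inner_sub_left, FunLike.coe_pow_eq_iterate, hfix]
      ring
    have hdefect := (abs_real_inner_le_norm _ x).trans
      (mul_le_mul_of_nonneg_right (hcontr n (a - p)) (norm_nonneg x))
    rw [← inner_iterate_birkhoffAverage, ← hpx]
    linarith [(abs_le.1 hdefect).1]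
  have hsmall : ∀ ε > 0, ‖p‖ ^ 2 ≤ ε := by
    intro ε hε
    have hbound :
        Tendsto (fun L => ε + ‖birkhoffAverage ℝ V id L x - p‖ * ‖x‖) atTop (𝓝 ε) := by
      simpa using ((tendsto_iff_norm_sub_tendsto_zero.1 hlim).mul_const ‖x‖).const_add ε
    refine ge_of_tendsto' hbound fun L => ?_
    obtain ⟨n, hn⟩ := hJ.exists_run_of_eventually (hx.eventually (ge_mem_nhds hε)) L
    refine (hkey n L).trans (add_le_add_left ?_ _)
    have hsum : ∑ k ∈ range L, ⟪V^[n + k] x, x⟫_ℝ ≤ L * ε := by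
      simpa using sum_le_card_nsmul (range L) _ ε fun k hk => hn k (mem_range.1 hk).le
    rcases L.eq_zero_or_pos with rfl | hL
    · simpa using hε.le
    · exact div_le_of_le_mul₀ (Nat.cast_nonneg L) hε.le (by linarith)
  have : ‖p‖ ^ 2 ≤ 0 := le_of_forall_gt_imp_ge_of_dense hsmall
  simpa using this

end MeanErgodic

section Koopman

variable {X Y : Type*} [MeasurableSpace X] [MeasurableSpace Y]

theorem MeasureTheory.Lp.inner_compMeasurePreserving_toLp {ν : Measure X} {ρ : Measure Y}
    {φ : X → Y} (hφ : MeasurePreserving φ ν ρ) {u : Y → ℝ} {w : X → ℝ} (hu : MemLp u 2 ρ)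
    (hw : MemLp w 2 ν) :
    ⟪Lp.compMeasurePreserving φ hφ (hu.toLp u), hw.toLp w⟫_ℝ = ∫ x, u (φ x) * w x ∂ν := by
  rw [L2.inner_def]
  refine integral_congr_ae ?_
  filter_upwards [Lp.coeFn_compMeasurePreserving (hu.toLp u) hφ,
    hu.coeFn_toLp.comp_tendsto hφ.quasiMeasurePreserving.tendsto_ae, hw.coeFn_toLp]
    with x h₁ h₂ h₃
  rw [RCLike.inner_apply, conj_trivial, h₁, h₂, h₃, Function.comp_apply, mul_comm]

theorem MeasureTheory.MeasurePreserving.inner_compMeasurePreserving_prodMap_iterate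
    {μ : Measure X} [SFinite μ] {T : X → X} (hT : MeasurePreserving T μ μ) {f g : X → ℝ}
    (hF : MemLp (fun z : X × X => f z.1 * f z.2) 2 (μ.prod μ))
    (hG : MemLp (fun z : X × X => g z.1 * g z.2) 2 (μ.prod μ)) (k : ℕ) :
    ⟪(Lp.compMeasurePreserving (Prod.map T T) (hT.prod hT))^[k] (hF.toLp _), hG.toLp _⟫_ℝ
      = (∫ x, f (T^[k] x) * g x ∂μ) ^ 2 := by
  rw [Lp.compMeasurePreserving_iterate, Lp.inner_compMeasurePreserving_toLp, Prod.map_iterate,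
    sq, ← integral_prod_mul]
  congr 1 with z
  simp only [Prod.map_fst, Prod.map_snd]
  ring

end Koopman

section CenteredIndicator

variable {X : Type*} [MeasurableSpace X] {μ : Measure X} {A B : Set X}

noncomputable def centeredIndicator (μ : Measure X) (A : Set X) (x : X) : ℝ :=
  A.indicator 1 x - μ.real A

theorem integral_centeredIndicator_mul [IsProbabilityMeasure μ] (hA : MeasurableSet A)
    (hB : MeasurableSet B) :
    ∫ x, centeredIndicator μ A x * centeredIndicator μ B x ∂μ
      = μ.real (A ∩ B) - μ.real A * μ.real B := by
  have hA2 : MemLp (A.indicator (1 : X → ℝ)) 2 μ := (memLp_const 1).indicator hA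
  have hB2 : MemLp (B.indicator (1 : X → ℝ)) 2 μ := (memLp_const 1).indicator hB
  have hcov := ProbabilityTheory.covariance_eq_sub hA2 hB2
  rw [ProbabilityTheory.covariance, ← Set.inter_indicator_one, integral_indicator_one hA,
    integral_indicator_one hB, integral_indicator_one (hA.inter hB)] at hcov
  exact hcov

theorem MeasureTheory.MeasurePreserving.integral_centeredIndicator_comp_mul
    [IsProbabilityMeasure μ] {φ : X → X} (hφ : MeasurePreserving φ μ μ) (hA : MeasurableSet A)
    (hB : MeasurableSet B) :
    ∫ x, centeredIndicator μ A (φ x) * centeredIndicator μ B x ∂μ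
      = μ.real (φ⁻¹' A ∩ B) - μ.real A * μ.real B := by
  have hpre : μ.real (φ⁻¹' A) = μ.real A := hφ.measureReal_preimage hA.nullMeasurableSet
  have hcomp : ∀ x, centeredIndicator μ A (φ x) = centeredIndicator μ (φ⁻¹' A) x := fun x => by
    rw [centeredIndicator, centeredIndicator, hpre, ← Set.indicator_comp_right]
    rfl
  simp_rw [hcomp, integral_centeredIndicator_mul (hφ.measurable hA) hB, hpre]

theorem memLp_centeredIndicator_mul_centeredIndicator [IsFiniteMeasure μ] (hA : MeasurableSet A)
    (p : ENNReal) :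
    MemLp (fun z : X × X => centeredIndicator μ A z.1 * centeredIndicator μ A z.2) p
      (μ.prod μ) := by
  have hmeas : Measurable (centeredIndicator μ A) :=
    (measurable_const.indicator hA).sub measurable_const
  have hbound : ∀ x, ‖centeredIndicator μ A x‖ ≤ 1 + μ.real A := fun x =>
    (norm_sub_le _ _).trans (add_le_add ((norm_indicator_le_norm_self _ x).trans (by simp))
      (by simp [abs_of_nonneg measureReal_nonneg]))
  refine MemLp.of_bound
    ((hmeas.comp measurable_fst).mul (hmeas.comp measurable_snd)).aestronglyMeasurable
    ((1 + μ.real A) * (1 + μ.real A)) (ae_of_all _ fun z => ?_)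
  rw [norm_mul]
  exact mul_le_mul (hbound _) (hbound _) (norm_nonneg _) (by positivity)

end CenteredIndicator

section WeakMixing

variable {X : Type*} [MeasurableSpace X] {μ : Measure X} {T : X → X}

theorem WeakMixing.exists_isFullSet_tendsto (h : WeakMixing μ T) {A : Set X}
    (hA : MeasurableSet A) :
    ∃ J : Set ℕ, IsFullSet J ∧ Tendsto (fun n : ℕ => (μ (T^[n] ⁻¹' A ∩ A)).toReal)
      (atTop ⊓ 𝓟 J) (𝓝 ((μ A).toReal ^ 2)) :=
  exists_isFullSet_tendsto_of_forall_run fun _ hε L => by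
    simpa [Real.dist_eq, sq] using
      exists_run_lt_of_tendsto_cesaro_zero (fun _ => abs_nonneg _) (h A A hA hA) hε L

theorem MeasureTheory.MeasurePreserving.weakMixing_of_forall_exists_isFullSet
    [IsProbabilityMeasure μ] (hT : MeasurePreserving T μ μ)
    (h : ∀ A : Set X, MeasurableSet A → ∃ J : Set ℕ, IsFullSet J ∧
      Tendsto (fun n : ℕ => (μ (T^[n] ⁻¹' A ∩ A)).toReal) (atTop ⊓ 𝓟 J)
        (𝓝 ((μ A).toReal ^ 2))) :
    WeakMixing μ T := by
  intro A B hA hB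
  obtain ⟨J, hJ, hAA⟩ := h A hA
  let V := (Lp.compMeasurePreservingₗᵢ ℝ (Prod.map T T) (hT.prod hT) (E := ℝ) (p := 2)
    ).toContinuousLinearMap
  have hF := memLp_centeredIndicator_mul_centeredIndicator (μ := μ) hA 2
  have hcorr : ∀ {C : Set X} (hC : MeasurableSet C) (k : ℕ),
      ⟪V^[k] (hF.toLp _),
        (memLp_centeredIndicator_mul_centeredIndicator (μ := μ) hC 2).toLp _⟫_ℝ
        = ((μ (T^[k] ⁻¹' A ∩ C)).toReal - (μ A).toReal * (μ C).toReal) ^ 2 := fun hC k => by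
    refine (hT.inner_compMeasurePreserving_prodMap_iterate hF _ k).trans ?_
    rw [(hT.iterate k).integral_centeredIndicator_comp_mul hA hC]
    rfl
  have hmean := tendsto_birkhoffAverage_zero_of_tendsto_inner_iterate
    (LinearIsometry.norm_toContinuousLinearMap_le _) hJ (x := hF.toLp _) (by
      refine (tendsto_congr fun k => hcorr hA k).2 ?_
      have := (hAA.sub_const ((μ A).toReal ^ 2)).pow 2
      rwa [sub_self, zero_pow two_ne_zero, sq (μ A).toReal] at this)
  have hsq := (hmean.inner (𝕜 := ℝ) (tendsto_const_nhds
    (x := (memLp_centeredIndicator_mul_centeredIndicator (μ := μ) hB 2).toLp _))).congr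
    fun L => inner_iterate_birkhoffAverage V _ _ 0 L
  simp_rw [inner_zero_left, zero_add, hcorr hB] at hsq
  exact tendsto_cesaro_abs_of_tendsto_cesaro_sq hsq

end WeakMixing

theorem weakMixing_iff_full_set {X : Type*} [MeasurableSpace X]
    (μ : Measure X) [IsProbabilityMeasure μ]
    (T : X → X) (hT : MeasurePreserving T μ μ) :
    WeakMixing μ T ↔
      ∀ A : Set X, MeasurableSet A → ∃ J : Set ℕ, IsFullSet J ∧
        Tendsto (fun n : ℕ => (μ (T^[n] ⁻¹' A ∩ A)).toReal)
          (atTop ⊓ 𝓟 J) (nhds ((μ A).toReal ^ 2)) :=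
  ⟨fun h _ hA => h.exists_isFullSet_tendsto hA, hT.weakMixing_of_forall_exists_isFullSet⟩
end

section
/- Fix ω ∈ ℝ/ℤ. For μ = 1, the set A_{1,ω} = { t ∈ ℝ/ℤ : ‖t + pω‖ < 1/p for infinitely many p ∈ ℕ } contains every t ∈ ℝ/ℤ that is not of the form −qω mod 1 for some integer q. -/
/-!
Take a good rational approximation `a / q` of a lift `Ω` of `ω`, in lowest terms, so that
`θ = qΩ - a` satisfies `|θ| < 1 / q`; say `θ ≥ 0` (otherwise negate everything). As `p` runs
through `0, …, q - 1`, the residues `p a mod q` run through all of `ℤ/qℤ`, so `p` can be chosen with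
`q t + p a ≡ x (mod q)` for some real `x ∈ (-1, 0]`. Since `q (t + pΩ) = q t + p a + p θ` and
`p θ ∈ [0, 1)`, this gives `‖t + pω‖ < 1 / q`. As `t` is not of the form `-qω`, for every `b` the
minimum of `‖t + jω‖` over `j ≤ b` is positive, so for `q` large this `p` exceeds `b`, and
`1 / q < 1 / p`.
-/

open Set

lemma Rat.num_eq_cast_mul_den {K : Type*} [Field K] [CharZero K] (r : ℚ) :
    (r.num : K) = r * r.den := by
  exact_mod_cast (Rat.mul_den_eq_num r).symm

lemma Int.exists_nat_lt_mul_modEq {a : ℤ} {q : ℕ} (hq : 0 < q) (h : IsCoprime a q) (c : ℤ) :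
    ∃ p < q, (p : ℤ) * a ≡ c [ZMOD q] := by
  have : NeZero q := ⟨hq.ne'⟩
  have ha : IsUnit (a : ZMod q) := by
    simpa using isCoprime_zero_right.mp (by simpa using h.map (Int.castRingHom (ZMod q)))
  refine ⟨((c : ZMod q) * ↑ha.unit⁻¹).val, ZMod.val_lt _, ?_⟩
  rw [← ZMod.intCast_eq_intCast_iff]
  push_cast
  rw [ZMod.natCast_zmod_val, mul_assoc, IsUnit.val_inv_mul, mul_one]

lemma finite_setOf_den_le_and_abs_sub_lt_one (x : ℝ) (M : ℕ) :
    {r : ℚ | r.den ≤ M ∧ |x - r| < 1}.Finite := by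
  set B : ℤ := ⌈(|x| + 1) * M⌉
  refine (((finite_Icc (-B) B).prod (finite_Iic M)).image fun z => (z.1 / z.2 : ℚ)).subset ?_
  rintro r ⟨hden, hr⟩
  refine ⟨(r.num, r.den), ⟨abs_le.mp ?_, hden⟩, Rat.num_div_den r⟩
  have hnum : (|r.num| : ℝ) ≤ (|x| + 1) * M := by
    rw [Rat.num_eq_cast_mul_den, abs_mul, Nat.abs_cast]
    gcongr
    linarith [abs_sub_abs_le_abs_sub (r : ℝ) x, abs_sub_comm (r : ℝ) x]
  exact_mod_cast hnum.trans (Int.le_ceil _)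

lemma Irrational.exists_lt_coprime_abs_mul_sub_lt {x : ℝ} (hx : Irrational x) (M : ℕ) :
    ∃ q : ℕ, M < q ∧ ∃ a : ℤ, IsCoprime a q ∧ |q * x - a| < 1 / q := by
  obtain ⟨r, hr, hrM⟩ := ((Real.infinite_rat_abs_sub_lt_one_div_den_sq_of_irrational hx).sdiff
    (finite_setOf_den_le_and_abs_sub_lt_one x M)).nonempty
  have hr : |x - r| < 1 / (r.den : ℝ) ^ 2 := hr
  have hden : (1 : ℝ) ≤ r.den := by exact_mod_cast r.pos
  refine ⟨r.den, ?_, r.num, Int.isCoprime_iff_gcd_eq_one.mpr r.reduced, ?_⟩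
  · by_contra! h
    exact hrM ⟨h, hr.trans_le (by rw [div_le_one (by positivity)]; nlinarith)⟩
  · rw [Rat.num_eq_cast_mul_den, mul_comm (r : ℝ), ← mul_sub, mul_comm, abs_mul, Nat.abs_cast]
    calc |x - r| * r.den < 1 / (r.den : ℝ) ^ 2 * r.den := by gcongr
      _ = 1 / r.den := by field_simp

namespace AddCircle

lemma irrational_iff_not_isOfFinAddOrder {x : ℝ} :
    Irrational x ↔ ¬IsOfFinAddOrder (x : AddCircle (1 : ℝ)) := by
  simp [Irrational, not_isOfFinAddOrder_iff_forall_rat_ne_div, eq_comm]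

lemma coe_add_intCast (x : ℝ) (m : ℤ) : ((x + m : ℝ) : AddCircle (1 : ℝ)) = x := by
  rw [coe_add, (coe_eq_zero_iff 1 (x := (m : ℝ))).2 ⟨m, by simp⟩, add_zero]

lemma exists_lt_norm_add_nsmul_lt_of_nonneg {Ω : ℝ} {a : ℤ} {q : ℕ} (hq : 0 < q)
    (hcop : IsCoprime a q) (hθ₀ : 0 ≤ q * Ω - a) (hθ : q * Ω - a < 1 / q)
    (t : AddCircle (1 : ℝ)) : ∃ p < q, ‖t + p • (Ω : AddCircle (1 : ℝ))‖ < 1 / q := by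
  obtain ⟨T, rfl⟩ := QuotientAddGroup.mk_surjective t
  set θ := q * Ω - a
  set x := q * T - ⌈q * T⌉
  obtain ⟨p, hpq, hpa⟩ := Int.exists_nat_lt_mul_modEq hq hcop (-⌈q * T⌉)
  obtain ⟨m, hm⟩ := Int.modEq_iff_dvd.mp hpa.symm
  have hq₀ : (0 : ℝ) < q := by exact_mod_cast hq
  have hlift : T + p * Ω = (x + p * θ) / q + m := by
    have hm : (p : ℝ) * a + ⌈q * T⌉ = q * m := by
      exact_mod_cast (by linarith : (p : ℤ) * a + ⌈q * T⌉ = q * m)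
    field_simp
    linear_combination hm
  have hx : -1 < x ∧ x ≤ 0 :=
    ⟨by linarith [Int.ceil_lt_add_one ((q : ℝ) * T)], by linarith [Int.le_ceil ((q : ℝ) * T)]⟩
  have hpθ : p * θ < 1 := calc
    p * θ ≤ q * θ := by gcongr
    _ < q * (1 / q) := by gcongr
    _ = 1 := mul_one_div_cancel hq₀.ne'
  refine ⟨p, hpq, ?_⟩
  rw [← coe_nsmul, ← coe_add, nsmul_eq_mul, hlift, coe_add_intCast]
  refine QuotientAddGroup.norm_mk_le_norm.trans_lt ?_
  rw [Real.norm_eq_abs, abs_div, abs_of_pos hq₀, div_lt_div_iff_of_pos_right hq₀, abs_lt]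
  constructor <;> nlinarith [mul_nonneg (Nat.cast_nonneg p) hθ₀]

lemma exists_lt_norm_add_nsmul_lt {Ω : ℝ} {a : ℤ} {q : ℕ} (hq : 0 < q) (hcop : IsCoprime a q)
    (hθ : |q * Ω - a| < 1 / q) (t : AddCircle (1 : ℝ)) :
    ∃ p < q, ‖t + p • (Ω : AddCircle (1 : ℝ))‖ < 1 / q := by
  rcases le_or_gt 0 (q * Ω - a) with hθ₀ | hθ₀
  · exact exists_lt_norm_add_nsmul_lt_of_nonneg hq hcop hθ₀ (abs_lt.mp hθ).2 t
  · obtain ⟨p, hpq, hp⟩ := exists_lt_norm_add_nsmul_lt_of_nonneg (Ω := -Ω) hq hcop.neg_left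
      (by push_cast; linarith) (by push_cast; linarith [(abs_lt.mp hθ).1]) (-t)
    refine ⟨p, hpq, ?_⟩
    rwa [coe_neg, smul_neg, ← neg_add, norm_neg] at hp

end AddCircle

/-- Minkowski's theorem on inhomogeneous Diophantine approximation on the circle:
for irrational `ω` (i.e. no positive multiple of `ω` is `0` in `ℝ/ℤ`), every `t`
not in the `ℤ`-orbit `{-qω}` satisfies `‖t + pω‖ < 1/p` for infinitely many `p`. -/
theorem minkowski_inhomogeneous (ω : AddCircle (1:ℝ))
    (hω : ∀ n : ℕ, 0 < n → n • ω ≠ 0)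
    (t : AddCircle (1:ℝ)) (ht : ∀ q : ℤ, t ≠ -(q • ω)) :
    {p : ℕ | ‖t + p • ω‖ < 1 / (p : ℝ)}.Infinite := by
  obtain ⟨Ω, rfl⟩ := QuotientAddGroup.mk_surjective ω
  set ω : AddCircle (1 : ℝ) := ↑Ω
  have hΩ : Irrational Ω := AddCircle.irrational_iff_not_isOfFinAddOrder.mpr
    (by simpa [isOfFinAddOrder_iff_nsmul_eq_zero] using hω)
  refine infinite_of_forall_exists_gt fun b => ?_
  obtain ⟨j₀, -, hj₀⟩ := (Finset.range (b + 1)).exists_min_image (‖t + · • ω‖) ⟨0, by simp⟩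
  set ε := ‖t + j₀ • ω‖
  have hε : 0 < ε :=
    norm_pos_iff.mpr fun h => ht j₀ (by rw [natCast_zsmul]; exact eq_neg_of_add_eq_zero_left h)
  obtain ⟨q, hqM, a, hcop, hθ⟩ := hΩ.exists_lt_coprime_abs_mul_sub_lt ⌈1 / ε⌉₊
  have hq : 0 < q := by omega
  obtain ⟨p, hpq, hp⟩ := AddCircle.exists_lt_norm_add_nsmul_lt hq hcop hθ t
  have hqε : 1 / (q : ℝ) < ε := by
    rw [one_div_lt (by exact_mod_cast hq) hε]
    exact Nat.lt_of_ceil_lt hqM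
  have hbp : b < p := by
    by_contra! hpb
    exact (hp.trans hqε).not_ge (hj₀ p (Finset.mem_range_succ_iff.mpr hpb))
  refine ⟨p, hp.trans_le ?_, hbp⟩
  gcongr
  exact_mod_cast (Nat.zero_le b).trans_lt hbp
end

section
/- Let T be a measure-preserving transformation of a probability space (X, β, μ) and suppose that for every measurable A there is a full set J ⊆ ℕ with lim_{n∈J} μ(T^{-n}A ∩ A) = μ(A)². Then T has no nontrivial eigenfunction: if f ∈ L²(μ) satisfies f∘T = λf a.e. for some complex λ with |λ| = 1 and λ ≠ 1, then f = 0 a.e. -/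
/-!
If `f ∘ T = λ f` with `λ ≠ 1` on the unit circle and `f ≠ 0`, pick a set `A = f⁻¹(B(c, r‖c‖))` of
positive measure on which `f` is nearly the nonzero constant `c`. Whenever `λⁿ` is far from `1`,
`Tⁿ` moves `A` off itself, so `μ(T⁻ⁿA ∩ A) = 0`. Among two consecutive integers `n, n + 1` one
always has `‖λⁿ - 1‖ ≥ ‖λ - 1‖ / 2`, so every full set contains arbitrarily large such `n`; the
correlations along `J` are then frequently `0`, forcing `μ(A)² = 0`.
-/

open MeasureTheory Filter

open Metric

lemma IsFullSet.exists_ge_mem_and_succ_mem {J : Set ℕ} (hJ : IsFullSet J) (M : ℕ) :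
    ∃ n ≥ M, n ∈ J ∧ n + 1 ∈ J := by
  obtain ⟨k, hk⟩ := hJ (M + 1)
  exact ⟨k + M, by omega, hk M (by omega), hk (M + 1) le_rfl⟩

section NormedDivisionRing

variable {𝕜 : Type*} [NormedDivisionRing 𝕜] {z : 𝕜}

lemma norm_sub_one_le_norm_pow_sub_one_add (hz : ‖z‖ = 1) (n : ℕ) :
    ‖z - 1‖ ≤ ‖z ^ n - 1‖ + ‖z ^ (n + 1) - 1‖ :=
  calc ‖z - 1‖ = ‖z ^ (n + 1) - z ^ n‖ := by
        rw [pow_succ, ← mul_sub_one, norm_mul, norm_pow, hz, one_pow, one_mul]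
    _ = ‖(z ^ (n + 1) - 1) - (z ^ n - 1)‖ := by rw [sub_sub_sub_cancel_right]
    _ ≤ ‖z ^ n - 1‖ + ‖z ^ (n + 1) - 1‖ := (norm_sub_le _ _).trans_eq (add_comm _ _)

lemma IsFullSet.frequently_le_norm_pow_sub_one {J : Set ℕ} (hJ : IsFullSet J) (hz : ‖z‖ = 1) :
    ∃ᶠ n in atTop ⊓ 𝓟 J, ‖z - 1‖ / 2 ≤ ‖z ^ n - 1‖ := by
  rw [frequently_inf_principal, frequently_atTop]
  intro M
  obtain ⟨n, hMn, hn, hn_succ⟩ := hJ.exists_ge_mem_and_succ_mem M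
  have := norm_sub_one_le_norm_pow_sub_one_add hz n
  by_cases hfar : ‖z - 1‖ / 2 ≤ ‖z ^ n - 1‖
  · exact ⟨n, hMn, hn, hfar⟩
  · exact ⟨n + 1, by omega, hn_succ, by linarith⟩

end NormedDivisionRing

section Eigenfunction

variable {X : Type*} [MeasurableSpace X] {μ : Measure X}

lemma ae_comp_iterate_eq_pow_smul {M α : Type*} [Monoid M] [MulAction M α] {T : X → X}
    (hT : Measure.QuasiMeasurePreserving T μ μ) {g : X → α} {z : M}
    (hg : ∀ᵐ x ∂μ, g (T x) = z • g x) (n : ℕ) : ∀ᵐ x ∂μ, g (T^[n] x) = z ^ n • g x := by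
  induction n with
  | zero => simp
  | succ n ih =>
    filter_upwards [hT.ae ih, hg] with x h_iter h_step
    rw [Function.iterate_succ_apply, h_iter, h_step, pow_succ, mul_smul]

lemma exists_measure_preimage_ball_ne_zero {E : Type*} [NormedAddCommGroup E]
    [SecondCountableTopology E] {g : X → E} (hg : ¬ g =ᵐ[μ] 0) {r : ℝ} (hr : 0 < r) :
    ∃ c, μ (g ⁻¹' ball c (r * ‖c‖)) ≠ 0 := by
  obtain ⟨S, hS, hS_cover⟩ :=
    TopologicalSpace.isOpen_iUnion_countable (fun c : E => ball c (r * ‖c‖)) fun _ => isOpen_ball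
  by_contra! h_null
  refine hg (ae_iff.2 (measure_mono_null (fun x (hx : g x ≠ 0) => ?_)
    ((measure_biUnion_null_iff hS).2 fun c _ => h_null c)))
  have : g x ∈ ⋃ c, ball c (r * ‖c‖) :=
    Set.mem_iUnion.2 ⟨g x, mem_ball_self (mul_pos hr (norm_pos_iff.2 hx))⟩
  rw [← hS_cover] at this
  simpa using this

variable {𝕜 E : Type*} [NormedField 𝕜] [NormedAddCommGroup E] [NormedSpace 𝕜 E]

lemma smul_notMem_ball_of_mem_ball {z : 𝕜} {a c : E} {r : ℝ} (hr : r ≤ 1 / 2)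
    (hz : 4 * r ≤ ‖z - 1‖) (ha : a ∈ ball c (r * ‖c‖)) : z • a ∉ ball c (r * ‖c‖) := by
  intro hza
  rw [mem_ball, dist_eq_norm] at ha hza
  have h_move : ‖z - 1‖ * ‖a‖ < 2 * r * ‖c‖ :=
    calc ‖z - 1‖ * ‖a‖ = ‖(z • a - c) - (a - c)‖ := by
          rw [sub_sub_sub_cancel_right, ← norm_smul, sub_smul, one_smul]
      _ ≤ ‖z • a - c‖ + ‖a - c‖ := norm_sub_le _ _
      _ < 2 * r * ‖c‖ := by linarith
  have h_a : (1 - r) * ‖c‖ < ‖a‖ := by linarith [norm_sub_norm_le c a, norm_sub_rev a c]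
  have hr0 : 0 ≤ r := by nlinarith [norm_nonneg (a - c), norm_nonneg c]
  have h_far : 4 * r * ‖a‖ ≤ ‖z - 1‖ * ‖a‖ := mul_le_mul_of_nonneg_right hz (norm_nonneg a)
  have h_near : 4 * r * ((1 - r) * ‖c‖) ≤ 4 * r * ‖a‖ :=
    mul_le_mul_of_nonneg_left h_a.le (by positivity)
  nlinarith [mul_nonneg hr0 (norm_nonneg c)]

lemma measure_preimage_inter_ball_eq_zero {S : X → X} {g : X → E} {z : 𝕜} {c : E} {r : ℝ}
    (hg : ∀ᵐ x ∂μ, g (S x) = z • g x) (hr : r ≤ 1 / 2) (hz : 4 * r ≤ ‖z - 1‖) :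
    μ (S ⁻¹' (g ⁻¹' ball c (r * ‖c‖)) ∩ g ⁻¹' ball c (r * ‖c‖)) = 0 :=
  measure_mono_null (fun x ⟨hSx, hx⟩ => show ¬ g (S x) = z • g x from
    fun hgx => smul_notMem_ball_of_mem_ball hr hz hx (hgx ▸ hSx))
    (ae_iff.1 hg)

end Eigenfunction

theorem no_nontrivial_eigenfunction_of_full_set_mixing {X : Type*} [MeasurableSpace X]
    (μ : Measure X) [IsProbabilityMeasure μ]
    (T : X → X) (hT : MeasurePreserving T μ μ)
    (h : ∀ A : Set X, MeasurableSet A → ∃ J : Set ℕ, IsFullSet J ∧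
      Tendsto (fun n : ℕ => (μ (T^[n] ⁻¹' A ∩ A)).toReal)
        (atTop ⊓ 𝓟 J) (nhds ((μ A).toReal ^ 2)))
    (f : X → ℂ) (hf : MemLp f 2 μ)
    (lam : ℂ) (hlam : ‖lam‖ = 1) (hne : lam ≠ 1)
    (heig : ∀ᵐ x ∂μ, f (T x) = lam * f x) :
    f =ᵐ[μ] 0 := by
  by_contra hf0
  set g := hf.1.mk f
  have hfg : f =ᵐ[μ] g := hf.1.ae_eq_mk
  have hg_eig : ∀ᵐ x ∂μ, g (T x) = lam • g x := by
    filter_upwards [heig, hfg, hT.quasiMeasurePreserving.ae_eq_comp hfg] with x h_eig h_x h_Tx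
    rw [← h_x, smul_eq_mul, ← h_eig]
    exact h_Tx.symm
  set ε := ‖lam - 1‖
  have hε : 0 < ε := norm_pos_iff.2 (sub_ne_zero.2 hne)
  have hε_le : ε ≤ 2 := (norm_sub_le _ _).trans (by rw [hlam, norm_one]; norm_num)
  obtain ⟨c, hA⟩ := exists_measure_preimage_ball_ne_zero (fun hg0 => hf0 (hfg.trans hg0))
    (show 0 < ε / 8 by positivity)
  obtain ⟨J, hJ, h_lim⟩ := h _ (hf.1.stronglyMeasurable_mk.measurable measurableSet_ball)
  have h_zero : ∃ᶠ n in atTop ⊓ 𝓟 J, (μ (T^[n] ⁻¹' (g ⁻¹' ball c (ε / 8 * ‖c‖)) ∩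
      g ⁻¹' ball c (ε / 8 * ‖c‖))).toReal = 0 :=
    (hJ.frequently_le_norm_pow_sub_one hlam).mono fun n hn => by
      rw [measure_preimage_inter_ball_eq_zero
        (ae_comp_iterate_eq_pow_smul hT.quasiMeasurePreserving hg_eig n) (by linarith)
        (by linarith), ENNReal.toReal_zero]
  have h_sq := tendsto_nhds_unique_of_frequently_eq h_lim tendsto_const_nhds h_zero
  rw [pow_eq_zero_iff two_ne_zero, ENNReal.toReal_eq_zero_iff] at h_sq
  exact hA (h_sq.resolve_right (measure_ne_top _ _))
end

section
/- Let a : ℕ → ℝ be a bounded nonnegative sequence. Then (1/n) Σ_{k=0}^{n-1} a_k → 0 if and only if there exists a set J ⊆ ℕ of full density such that a_n → 0 along n ∈ J. -/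
open Filter

/-- A set `J ⊆ ℕ` has *full density* if `#{n ∈ J : n ≤ N}/N → 1`. -/
def HasFullDensity (J : Set ℕ) : Prop :=
  Tendsto (fun N : ℕ => (Set.ncard {n | n ∈ J ∧ n ≤ N} : ℝ) / N) atTop (nhds 1)

/-!
If `J` has full density and `a → 0` along `J`, split `a` into its parts on `J` and on `Jᶜ`: the
first tends to `0`, hence so do its Cesàro means, and the second is at most `C` on a set of density
zero. Conversely, by Markov's inequality each set `{k | 1/(m+1) ≤ a k}` has density zero; a diagonal
argument along slowly growing thresholds glues them into one set `S` of density zero containing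
each of them up to finitely many points, and `J = Sᶜ` works.
-/

open Finset Topology

open scoped Classical in
def HasDensityZero (S : Set ℕ) : Prop :=
  Tendsto (fun N : ℕ => (Nat.count (· ∈ S) N : ℝ) / N) atTop (𝓝 0)

theorem tendsto_div_natCast_iff_div_natCast_add_one {u : ℕ → ℝ} {l : ℝ} :
    Tendsto (fun N : ℕ => u N / N) atTop (𝓝 l) ↔
      Tendsto (fun N : ℕ => u N / (N + 1)) atTop (𝓝 l) := by
  have hratio := tendsto_natCast_div_add_atTop (1 : ℝ)
  have hmul : ∀ᶠ N : ℕ in atTop, u N / (N + 1) = u N / N * (N / (N + 1)) := by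
    filter_upwards [eventually_ne_atTop 0] with N hN
    field_simp
  constructor
  · intro h
    simpa using (h.mul hratio).congr' (hmul.mono fun N hN => hN.symm)
  · intro h
    refine (by simpa using h.mul (hratio.inv₀ one_ne_zero) :
      Tendsto (fun N : ℕ => u N / (N + 1) * ((N : ℝ) / (N + 1))⁻¹) atTop (𝓝 l)).congr' ?_
    filter_upwards [eventually_ne_atTop 0, hmul] with N hN h
    rw [h, mul_inv_cancel_right₀ (by positivity)]

open scoped Classical in
theorem ncard_setOf_mem_and_le_add_count_compl (J : Set ℕ) (N : ℕ) :
    {n | n ∈ J ∧ n ≤ N}.ncard + Nat.count (· ∈ Jᶜ) (N + 1) = N + 1 := by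
  have hJ : {n | n ∈ J ∧ n ≤ N} = ↑(range (N + 1) |>.filter (· ∈ J)) := by
    ext n
    simp [and_comm]
  rw [hJ, Set.ncard_coe_finset, Nat.count_eq_card_filter_range]
  simpa using card_filter_add_card_filter_not (s := range (N + 1)) (· ∈ J)

theorem hasFullDensity_iff_hasDensityZero_compl (J : Set ℕ) :
    HasFullDensity J ↔ HasDensityZero Jᶜ := by
  classical
  have hJ (N : ℕ) : ({n | n ∈ J ∧ n ≤ N}.ncard : ℝ) / (N + 1) =
      1 - Nat.count (· ∈ Jᶜ) (N + 1) / (N + 1) := by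
    have := ncard_setOf_mem_and_le_add_count_compl J N
    rw [eq_sub_iff_add_eq, ← add_div, div_eq_one_iff_eq (by positivity)]
    exact_mod_cast this
  have hJc : HasDensityZero Jᶜ ↔
      Tendsto (fun N : ℕ => (Nat.count (· ∈ Jᶜ) (N + 1) : ℝ) / (N + 1)) atTop (𝓝 0) := by
    rw [HasDensityZero, ← tendsto_add_atTop_iff_nat 1]
    simp only [Nat.cast_add, Nat.cast_one]
    congr!
  rw [HasFullDensity, tendsto_div_natCast_iff_div_natCast_add_one, funext hJ, hJc]
  constructor <;> intro h <;> simpa using (tendsto_const_nhds (x := (1 : ℝ))).sub h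

theorem HasDensityZero.tendsto_cesaro_indicator {S : Set ℕ} (hS : HasDensityZero S) {a : ℕ → ℝ}
    (hnn : ∀ n, 0 ≤ a n) {C : ℝ} (hC : ∀ n, a n ≤ C) :
    Tendsto (fun n : ℕ => (∑ k ∈ range n, S.indicator a k) / n) atTop (𝓝 0) := by
  classical
  have hsum (n : ℕ) : ∑ k ∈ range n, S.indicator a k ≤ C * Nat.count (· ∈ S) n := by
    rw [sum_indicator_eq_sum_filter, Nat.count_eq_card_filter_range, mul_comm, ← nsmul_eq_mul]
    exact sum_le_card_nsmul _ _ _ fun k _ => hC k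
  refine squeeze_zero (fun n => div_nonneg (sum_nonneg fun k _ => Set.indicator_nonneg
    (fun k _ => hnn k) k) n.cast_nonneg) (fun n => ?_) (by simpa using hS.const_mul C)
  rw [mul_div_assoc']
  exact div_le_div_of_nonneg_right (hsum n) n.cast_nonneg

theorem tendsto_indicator_of_tendsto_inf_principal {α M : Type*} [TopologicalSpace M] [Zero M]
    {l : Filter α} {f : α → M} {s : Set α} (h : Tendsto f (l ⊓ 𝓟 s) (𝓝 0)) :
    Tendsto (s.indicator f) l (𝓝 0) := by
  classical
  simpa [Set.piecewise_eq_indicator] using h.piecewise (g := 0) tendsto_const_nhds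

theorem hasDensityZero_setOf_le_of_tendsto_cesaro {a : ℕ → ℝ} (hnn : ∀ n, 0 ≤ a n) {δ : ℝ}
    (hδ : 0 < δ) (h : Tendsto (fun n : ℕ => (∑ k ∈ range n, a k) / n) atTop (𝓝 0)) :
    HasDensityZero {k | δ ≤ a k} := by
  have hmarkov (n : ℕ) : Nat.count (· ∈ {k | δ ≤ a k}) n * δ ≤ ∑ k ∈ range n, a k := by
    rw [Nat.count_eq_card_filter_range, ← nsmul_eq_mul]
    calc _ ≤ ∑ k ∈ range n with δ ≤ a k, a k :=
          card_nsmul_le_sum _ _ _ fun k hk => (mem_filter.1 hk).2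
      _ ≤ ∑ k ∈ range n, a k :=
          sum_le_sum_of_subset_of_nonneg (filter_subset _ _) fun k _ _ => hnn k
  refine squeeze_zero (fun n => by positivity) (fun n => ?_) (by simpa using h.div_const δ)
  rw [div_right_comm]
  exact div_le_div_of_nonneg_right ((le_div_iff₀ hδ).2 (hmarkov n)) n.cast_nonneg

theorem exists_monotone_tendsto_diagonal {α : Type*} [PseudoMetricSpace α] {u : ℕ → ℕ → α}
    {l : α} (hu : ∀ m, Tendsto (u m) atTop (𝓝 l)) :
    ∃ φ : ℕ → ℕ, Monotone φ ∧ Tendsto φ atTop atTop ∧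
      Tendsto (fun n => u (φ n) n) atTop (𝓝 l) := by
  classical
  have hT (m : ℕ) : ∃ T, ∀ n ≥ T, dist (u m n) l < 1 / (m + 1) :=
    Metric.tendsto_atTop.1 (hu m) _ Nat.one_div_pos_of_nat
  choose T hT using hT
  -- `φ n` is the largest `m ≤ n` such that `n` is past all thresholds `T 0, …, T m`.
  let P (n m : ℕ) : Prop := ∀ i ≤ m, T i ≤ n
  let φ (n : ℕ) : ℕ := Nat.findGreatest (P n) n
  have hφ (m : ℕ) : ∀ᶠ n in atTop, m ≤ φ n ∧ P n (φ n) := by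
    have hP : ∀ᶠ n in atTop, ∀ i ∈ range (m + 1), T i ≤ n :=
      (eventually_all_finset _).2 fun i _ => eventually_ge_atTop (T i)
    filter_upwards [hP, eventually_ge_atTop m] with n hn hmn
    have hPm : P n m := fun i hi => hn i (mem_range_succ_iff.2 hi)
    exact ⟨Nat.le_findGreatest hmn hPm, Nat.findGreatest_spec hmn hPm⟩
  refine ⟨φ, fun n n' hnn' => Nat.findGreatest_mono (fun m hm i hi => (hm i hi).trans hnn') hnn',
    tendsto_atTop.2 fun m => (hφ m).mono fun n hn => hn.1, Metric.tendsto_nhds.2 fun ε hε => ?_⟩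
  obtain ⟨m, hm⟩ := exists_nat_one_div_lt hε
  filter_upwards [hφ m] with n ⟨hmφ, hPφ⟩
  calc dist (u (φ n) n) l < 1 / (φ n + 1) := hT (φ n) n (hPφ (φ n) le_rfl)
    _ ≤ 1 / (m + 1) := by gcongr
    _ < ε := hm

theorem HasDensityZero.exists_eventually_mem {E : ℕ → Set ℕ} (hE : Monotone E)
    (h : ∀ m, HasDensityZero (E m)) :
    ∃ S : Set ℕ, HasDensityZero S ∧ ∀ m, ∀ᶠ n in atTop, n ∈ E m → n ∈ S := by
  classical
  obtain ⟨φ, hφ_mono, hφ_top, hφ_lim⟩ := exists_monotone_tendsto_diagonal h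
  refine ⟨{k | k ∈ E (φ k)}, ?_, fun m => ?_⟩
  · have hcount (n : ℕ) : Nat.count (· ∈ {k | k ∈ E (φ k)}) n ≤ Nat.count (· ∈ E (φ n)) n :=
      Nat.count_mono_left fun k hk hkE => hE (hφ_mono hk.le) hkE
    exact squeeze_zero (fun n => by positivity)
      (fun n => div_le_div_of_nonneg_right (by exact_mod_cast hcount n) n.cast_nonneg) hφ_lim
  · filter_upwards [tendsto_atTop.1 hφ_top m] with n hn hnE
    exact hE hn hnE

/-- Koopman–von Neumann lemma. -/
theorem koopman_von_neumann (a : ℕ → ℝ) (hnn : ∀ n, 0 ≤ a n)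
    (hbd : ∃ C : ℝ, ∀ n, a n ≤ C) :
    Tendsto (fun n : ℕ => (∑ k ∈ Finset.range n, a k) / n) atTop (nhds 0) ↔
      ∃ J : Set ℕ, HasFullDensity J ∧
        Tendsto a (atTop ⊓ 𝓟 J) (nhds 0) := by
  constructor
  · intro h
    have hE : Monotone fun m : ℕ => {k | 1 / ((m : ℝ) + 1) ≤ a k} :=
      fun m m' hmm' k (hk : 1 / ((m : ℝ) + 1) ≤ a k) =>
        show 1 / ((m' : ℝ) + 1) ≤ a k from le_trans (by gcongr) hk
    obtain ⟨S, hS, hES⟩ := HasDensityZero.exists_eventually_mem hE fun m =>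
      hasDensityZero_setOf_le_of_tendsto_cesaro hnn Nat.one_div_pos_of_nat h
    refine ⟨Sᶜ, (hasFullDensity_iff_hasDensityZero_compl _).2 (by rwa [compl_compl]),
      tendsto_order.2 ⟨fun b hb => .of_forall fun n => hb.trans_le (hnn n), fun ε hε => ?_⟩⟩
    obtain ⟨m, hm⟩ := exists_nat_one_div_lt hε
    rw [eventually_inf_principal]
    filter_upwards [hES m] with n hn hnS
    exact (not_le.1 fun h => hnS (hn h)).trans hm
  · rintro ⟨J, hJ, hJa⟩
    obtain ⟨C, hC⟩ := hbd
    have hsplit (n : ℕ) : (∑ k ∈ range n, a k) / n =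
        (n⁻¹ : ℝ) * ∑ k ∈ range n, J.indicator a k + (∑ k ∈ range n, Jᶜ.indicator a k) / n := by
      rw [inv_mul_eq_div, ← add_div, ← sum_add_distrib]
      simp only [Set.indicator_self_add_compl_apply]
    simpa [hsplit] using (tendsto_indicator_of_tendsto_inf_principal hJa).cesaro.add
      (((hasFullDensity_iff_hasDensityZero_compl J).1 hJ).tendsto_cesaro_indicator hnn hC)
end
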